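/- arXiv:1104.1708 — 7 statements merged into one kernel-verified Lean document; each statement's English description precedes it below -/
import Mathlib

section
/- For every complex number τ, the operation f *_τ g = ∑_{k≥0} (τ^k/(2^k k!)) f^{(k)} g^{(k)} (a finite sum for polynomials) makes the space ℂ[w] of complex polynomials in one variable into a commutative, associative, unital ℂ-algebra: *_τ is ℂ-bilinear, f *_τ g = g *_τ f, (f *_τ g) *_τ h = f *_τ (g *_τ h), and 1 *_τ f = f for all polynomials f, g, h. -/
/-! Writing `c k = τ ^ k / (2 ^ k k!)`, one has `k c k = (τ / 2) c (k - 1)`; together with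
`(f X)⁽ᵏ⁾ = f⁽ᵏ⁾ X + k f⁽ᵏ⁻¹⁾` this gives `(f X) ⋆ g = (f ⋆ g) X + (τ / 2) f ⋆ g'`, and the
Leibniz rule shows that `d/dw` is a derivation of `⋆`. These two identities carry associativity
from `f` to `f X`; since it holds for constants and is stable under sums, it holds for all `f`.
Bilinearity and commutativity are read off the defining sum once it is extended to a common
range of summation. -/

open Polynomial

/-- The `τ`-product `f *_τ g = ∑_{k≥0} (τ^k/(2^k k!)) f^{(k)} g^{(k)}` on `ℂ[w]`;
the sum is finite since `derivative^[k] f = 0` for `k > natDegree f`. -/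
noncomputable def starProd (τ : ℂ) (f g : Polynomial ℂ) : Polynomial ℂ :=
  ∑ k ∈ Finset.range (f.natDegree + 1),
    (τ ^ k / (2 ^ k * (k.factorial : ℂ))) • (derivative^[k] f * derivative^[k] g)

open Finset

local notation:70 f:70 " ⋆[" τ "] " g:71 => starProd τ f g

noncomputable def starProdCoeff (τ : ℂ) (k : ℕ) : ℂ := τ ^ k / (2 ^ k * k.factorial)

section

variable (τ : ℂ)

theorem succ_mul_starProdCoeff_succ (k : ℕ) :
    ((k + 1 : ℕ) : ℂ) * starProdCoeff τ (k + 1) = τ / 2 * starProdCoeff τ k := by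
  unfold starProdCoeff
  rw [Nat.factorial_succ]
  push_cast
  field_simp
  ring

theorem starProd_eq_sum {f : ℂ[X]} {N : ℕ} (hN : f.natDegree < N) (g : ℂ[X]) :
    f ⋆[τ] g = ∑ k ∈ range N, starProdCoeff τ k • (derivative^[k] f * derivative^[k] g) := by
  refine sum_subset (range_subset_range.2 hN) fun k _ hk => ?_
  rw [iterate_derivative_eq_zero (by simpa using hk), zero_mul, smul_zero]

theorem starProd_comm (f g : ℂ[X]) : f ⋆[τ] g = g ⋆[τ] f := by
  rw [starProd_eq_sum τ (Nat.lt_succ_of_le (le_max_left f.natDegree g.natDegree)),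
    starProd_eq_sum τ (Nat.lt_succ_of_le (le_max_right f.natDegree g.natDegree))]
  simp only [mul_comm]

theorem starProd_add_left (f f' g : ℂ[X]) : (f + f') ⋆[τ] g = f ⋆[τ] g + f' ⋆[τ] g := by
  have := natDegree_add_le f f'
  rw [starProd_eq_sum τ (N := max f.natDegree f'.natDegree + 1) (by omega),
    starProd_eq_sum τ (N := max f.natDegree f'.natDegree + 1) (by omega),
    starProd_eq_sum τ (N := max f.natDegree f'.natDegree + 1) (by omega), ← sum_add_distrib]
  simp only [iterate_map_add, add_mul, smul_add]

theorem starProd_smul_left (a : ℂ) (f g : ℂ[X]) : (a • f) ⋆[τ] g = a • (f ⋆[τ] g) := by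
  have hN := Nat.lt_add_one f.natDegree
  rw [starProd_eq_sum τ ((natDegree_smul_le a f).trans_lt hN), starProd_eq_sum τ hN, smul_sum]
  simp only [iterate_derivative_smul, smul_mul_assoc, smul_comm a]

theorem starProd_add_right (f g g' : ℂ[X]) : f ⋆[τ] (g + g') = f ⋆[τ] g + f ⋆[τ] g' := by
  simp only [starProd_comm τ f, starProd_add_left]

theorem starProd_smul_right (a : ℂ) (f g : ℂ[X]) : f ⋆[τ] (a • g) = a • (f ⋆[τ] g) := by
  simp only [starProd_comm τ f, starProd_smul_left]

theorem one_starProd (f : ℂ[X]) : 1 ⋆[τ] f = f := by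
  simp [starProd]

theorem derivative_starProd (f g : ℂ[X]) :
    derivative (f ⋆[τ] g) = derivative f ⋆[τ] g + f ⋆[τ] derivative g := by
  have hN := Nat.lt_add_one f.natDegree
  rw [starProd_eq_sum τ hN, starProd_eq_sum τ ((natDegree_derivative_le f).trans_lt
    (Nat.sub_lt_succ _ _)), starProd_eq_sum τ hN, ← sum_add_distrib, derivative_sum]
  simp only [derivative_smul, derivative_mul, ← Function.iterate_succ_apply',
    Function.iterate_succ_apply, smul_add]

theorem mul_X_starProd (f g : ℂ[X]) :
    (f * X) ⋆[τ] g = f ⋆[τ] g * X + (τ / 2) • (f ⋆[τ] derivative g) := by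
  have hN := Nat.lt_add_one f.natDegree
  have hN' : (f * X).natDegree < f.natDegree + 1 + 1 :=
    natDegree_mul_le.trans_lt (by simp)
  rw [starProd_eq_sum τ hN', starProd_eq_sum τ (hN.trans (Nat.lt_add_one _)),
    starProd_eq_sum τ hN, sum_mul, smul_sum]
  simp only [iterate_derivative_mul_X, add_mul, smul_add, sum_add_distrib, smul_mul_assoc]
  refine congrArg₂ (· + ·) ?_ ?_
  · simp only [mul_right_comm _ X]
  · rw [sum_range_succ', zero_smul, smul_zero, add_zero]
    refine sum_congr rfl fun k _ => ?_
    rw [Nat.add_sub_cancel, ← Function.iterate_succ_apply, ← Nat.cast_smul_eq_nsmul ℂ,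
      smul_smul, smul_smul, mul_comm, succ_mul_starProdCoeff_succ]

theorem starProd_assoc_mul_X {f : ℂ[X]} (hf : ∀ g h, (f ⋆[τ] g) ⋆[τ] h = f ⋆[τ] (g ⋆[τ] h))
    (g h : ℂ[X]) : ((f * X) ⋆[τ] g) ⋆[τ] h = (f * X) ⋆[τ] (g ⋆[τ] h) :=
  calc ((f * X) ⋆[τ] g) ⋆[τ] h
      = ((f ⋆[τ] g) ⋆[τ] h) * X
          + (τ / 2) • ((f ⋆[τ] g) ⋆[τ] derivative h + (f ⋆[τ] derivative g) ⋆[τ] h) := by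
        rw [mul_X_starProd, starProd_add_left, mul_X_starProd, starProd_smul_left, smul_add,
          add_assoc]
    _ = (f ⋆[τ] (g ⋆[τ] h)) * X
          + (τ / 2) • (f ⋆[τ] (g ⋆[τ] derivative h) + f ⋆[τ] (derivative g ⋆[τ] h)) := by
        rw [hf, hf, hf]
    _ = (f * X) ⋆[τ] (g ⋆[τ] h) := by
        rw [mul_X_starProd, derivative_starProd, starProd_add_right, add_comm (f ⋆[τ] _)]

theorem starProd_assoc (f g h : ℂ[X]) : (f ⋆[τ] g) ⋆[τ] h = f ⋆[τ] (g ⋆[τ] h) := by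
  induction f using Polynomial.induction_on generalizing g h with
  | C a =>
    rw [← mul_one (C a), C_mul']
    simp only [starProd_smul_left, one_starProd]
  | add p q hp hq => simp only [starProd_add_left, hp, hq]
  | monomial n a ih => rw [pow_succ, ← mul_assoc]; exact starProd_assoc_mul_X τ ih g h

end

/-- For every `τ ∈ ℂ`, the `τ`-product makes `ℂ[w]` a commutative, associative,
unital `ℂ`-algebra: it is `ℂ`-bilinear, commutative, associative, and `1` is a unit. -/
theorem starProd_comm_assoc_algebra (τ : ℂ) :
    (∀ (a : ℂ) (f f' g : Polynomial ℂ),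
      starProd τ (a • f + f') g = a • starProd τ f g + starProd τ f' g) ∧
    (∀ (a : ℂ) (f g g' : Polynomial ℂ),
      starProd τ f (a • g + g') = a • starProd τ f g + starProd τ f g') ∧
    (∀ f g : Polynomial ℂ, starProd τ f g = starProd τ g f) ∧
    (∀ f g h : Polynomial ℂ,
      starProd τ (starProd τ f g) h = starProd τ f (starProd τ g h)) ∧
    (∀ f : Polynomial ℂ, starProd τ 1 f = f) :=
  ⟨fun a f f' g => by rw [starProd_add_left, starProd_smul_left],
    fun a f g g' => by rw [starProd_add_right, starProd_smul_right],
    starProd_comm τ, starProd_assoc τ, one_starProd τ⟩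
end

section
/- Let τ ∈ ℂ. For polynomials p, q ∈ ℂ[w] and an entire function f : ℂ → ℂ, the τ-products p *_τ f, f *_τ p (finite sums, since all but finitely many derivatives of a polynomial vanish) satisfy the associativity laws: p *_τ (q *_τ f) = (p *_τ q) *_τ f, p *_τ (f *_τ q) = (p *_τ f) *_τ q, and (f *_τ p) *_τ q = f *_τ (p *_τ q). -/
open Polynomial

/-- The `τ`-product `p *_τ f = f *_τ p` of a polynomial `p` and a function `f`
(a finite sum, since the derivatives of `p` eventually vanish). -/
noncomputable def starPF (τ : ℂ) (p : Polynomial ℂ) (f : ℂ → ℂ) : ℂ → ℂ :=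
  fun w => ∑ k ∈ Finset.range (p.natDegree + 1),
    τ ^ k / (2 ^ k * (k.factorial : ℂ)) * (derivative^[k] p).eval w * iteratedDeriv k f w

/-! Both sides of `p *_τ (q *_τ f) = (p *_τ q) *_τ f` are additive in `p` and agree for constant
`p`, so by induction over monomials it suffices to pass from `p` to `p * X`. Since
`starCoeff τ (k + 1) * (k + 1) = τ / 2 * starCoeff τ k`, multiplying by `X` obeys
`(p X) *_τ g = w (p *_τ g) + (τ / 2) (p *_τ g')`; together with the Leibniz rule
`(q *_τ f)' = q' *_τ f + q *_τ f'` this reduces the step to the induction hypothesis for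
`(q, f)`, `(q', f)` and `(q, f')`. The other two identities follow from the first by
commutativity of `*_τ` on polynomials. -/

noncomputable def starCoeff (τ : ℂ) (k : ℕ) : ℂ := τ ^ k / (2 ^ k * (k.factorial : ℂ))

lemma starCoeff_succ_mul (τ : ℂ) (k : ℕ) :
    starCoeff τ (k + 1) * ((k : ℂ) + 1) = τ / 2 * starCoeff τ k := by
  have hk : (k.factorial : ℂ) ≠ 0 := Nat.cast_ne_zero.2 k.factorial_ne_zero
  have hk1 : (k : ℂ) + 1 ≠ 0 := by exact_mod_cast k.succ_ne_zero
  simp only [starCoeff, Nat.factorial_succ, pow_succ, Nat.cast_mul, Nat.cast_succ]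
  field_simp

lemma Polynomial.iteratedDeriv_eval {𝕜 : Type*} [NontriviallyNormedField 𝕜] (q : 𝕜[X]) (k : ℕ) :
    iteratedDeriv k (fun z => q.eval z) = fun z => (derivative^[k] q).eval z := by
  induction k with
  | zero => rfl
  | succ k ih =>
    rw [iteratedDeriv_succ, ih, Function.iterate_succ_apply']
    funext z
    exact Polynomial.deriv _

lemma Differentiable.iteratedDeriv {E : Type*} [NormedAddCommGroup E] [NormedSpace ℂ E]
    [CompleteSpace E] {f : ℂ → E} (hf : Differentiable ℂ f) (k : ℕ) :
    Differentiable ℂ (iteratedDeriv k f) :=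
  hf.contDiff.differentiable_iteratedDeriv k (WithTop.coe_lt_top _)

lemma starPF_eq_sum_range (τ : ℂ) (p : ℂ[X]) (f : ℂ → ℂ) {N : ℕ} (hN : p.natDegree < N)
    (w : ℂ) : starPF τ p f w =
      ∑ k ∈ Finset.range N, starCoeff τ k * (derivative^[k] p).eval w * iteratedDeriv k f w := by
  refine Finset.sum_subset (Finset.range_subset_range.2 hN) fun k _ hk => ?_
  rw [iterate_derivative_eq_zero (by simpa using hk)]
  simp

lemma starProd_eq_sum_range (τ : ℂ) (p q : ℂ[X]) {N : ℕ} (hN : p.natDegree < N) :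
    starProd τ p q =
      ∑ k ∈ Finset.range N, starCoeff τ k • (derivative^[k] p * derivative^[k] q) := by
  refine Finset.sum_subset (Finset.range_subset_range.2 hN) fun k _ hk => ?_
  rw [iterate_derivative_eq_zero (by simpa using hk)]
  simp

lemma starProd_comm_s2 (τ : ℂ) (p q : ℂ[X]) : starProd τ p q = starProd τ q p := by
  rw [starProd_eq_sum_range τ p q (Nat.lt_succ_of_le (le_max_left _ q.natDegree)),
    starProd_eq_sum_range τ q p (Nat.lt_succ_of_le (le_max_right p.natDegree _))]
  simp only [mul_comm]

lemma eval_starProd (τ : ℂ) (p q : ℂ[X]) (w : ℂ) :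
    (starProd τ p q).eval w = starPF τ p (fun z => q.eval z) w := by
  simp [starProd, starPF, eval_finsetSum, iteratedDeriv_eval, mul_assoc]

lemma starPF_add_left (τ : ℂ) (p q : ℂ[X]) (f : ℂ → ℂ) :
    starPF τ (p + q) f = starPF τ p f + starPF τ q f := by
  funext w
  have hN : (p + q).natDegree < max p.natDegree q.natDegree + 1 :=
    Nat.lt_succ_of_le (natDegree_add_le p q)
  rw [Pi.add_apply, starPF_eq_sum_range τ _ f hN,
    starPF_eq_sum_range τ p f (Nat.lt_succ_of_le (le_max_left _ q.natDegree)),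
    starPF_eq_sum_range τ q f (Nat.lt_succ_of_le (le_max_right p.natDegree _))]
  simp only [← Finset.sum_add_distrib, iterate_map_add, eval_add]
  exact Finset.sum_congr rfl fun k _ => by ring

lemma starPF_smul_left (τ a : ℂ) (p : ℂ[X]) (f : ℂ → ℂ) :
    starPF τ (a • p) f = a • starPF τ p f := by
  funext w
  simp only [Pi.smul_apply]
  rw [starPF_eq_sum_range τ _ f (Nat.lt_succ_of_le (natDegree_smul_le a p)),
    starPF_eq_sum_range τ p f p.natDegree.lt_succ_self]
  simp only [smul_eq_mul, Finset.mul_sum, iterate_derivative_smul, eval_smul]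
  exact Finset.sum_congr rfl fun k _ => by ring

lemma starPF_C (τ a : ℂ) (f : ℂ → ℂ) : starPF τ (C a) f = a • f := by
  funext w
  simp [starPF]

lemma starPF_mul_X (τ : ℂ) (p : ℂ[X]) (f : ℂ → ℂ) (w : ℂ) :
    starPF τ (p * X) f w = w * starPF τ p f w + τ / 2 * starPF τ p (deriv f) w := by
  set N := p.natDegree + 1
  have hpX : (p * X).natDegree < N + 1 :=
    natDegree_mul_le.trans_lt (by have := natDegree_X_le (R := ℂ); omega)
  rw [starPF_eq_sum_range τ _ f hpX, starPF_eq_sum_range τ p f (by omega : p.natDegree < N + 1),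
    starPF_eq_sum_range τ p (deriv f) (by omega : p.natDegree < N),
    Finset.sum_range_succ', Finset.sum_range_succ' _ N]
  have hterm : ∀ k ∈ Finset.range N,
      starCoeff τ (k + 1) * (derivative^[k + 1] (p * X)).eval w * iteratedDeriv (k + 1) f w =
        w * (starCoeff τ (k + 1) * (derivative^[k + 1] p).eval w * iteratedDeriv (k + 1) f w) +
        τ / 2 * (starCoeff τ k * (derivative^[k] p).eval w * iteratedDeriv k (deriv f) w) := by
    intro k _
    rw [iterate_derivative_mul_X, Nat.add_sub_cancel, eval_add, eval_mul, eval_X, eval_smul,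
      nsmul_eq_mul, ← iteratedDeriv_succ']
    push_cast
    linear_combination (derivative^[k] p).eval w * iteratedDeriv (k + 1) f w *
      starCoeff_succ_mul τ k
  simp only [Finset.sum_congr rfl hterm, Finset.sum_add_distrib, ← Finset.mul_sum,
    Function.iterate_zero_apply, iteratedDeriv_zero, eval_mul, eval_X]
  ring

lemma hasDerivAt_starPF (τ : ℂ) (q : ℂ[X]) {f : ℂ → ℂ} (hf : Differentiable ℂ f) (w : ℂ) :
    HasDerivAt (starPF τ q f) (starPF τ (derivative q) f w + starPF τ q (deriv f) w) w := by
  have hq' : (derivative q).natDegree < q.natDegree + 1 :=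
    (natDegree_derivative_le q).trans_lt (by omega)
  rw [starPF_eq_sum_range τ _ f hq', starPF_eq_sum_range τ q (deriv f) q.natDegree.lt_succ_self,
    ← Finset.sum_add_distrib]
  refine HasDerivAt.fun_sum fun k _ => ?_
  have hP : HasDerivAt (fun z => (derivative^[k] q).eval z)
      ((derivative^[k] (derivative q)).eval w) w := by
    rw [← Function.iterate_succ_apply, Function.iterate_succ_apply']
    exact Polynomial.hasDerivAt _ w
  have hD : HasDerivAt (iteratedDeriv k f) (iteratedDeriv k (deriv f) w) w := by
    rw [← iteratedDeriv_succ', iteratedDeriv_succ]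
    exact (hf.iteratedDeriv k w).hasDerivAt
  exact ((hP.const_mul (starCoeff τ k)).mul hD).congr_deriv (by ring)

lemma starPF_add_right (τ : ℂ) (p : ℂ[X]) {g h : ℂ → ℂ} (hg : Differentiable ℂ g)
    (hh : Differentiable ℂ h) : starPF τ p (g + h) = starPF τ p g + starPF τ p h := by
  funext w
  simp only [starPF, Pi.add_apply, ← Finset.sum_add_distrib,
    iteratedDeriv_add hg.contDiff.contDiffAt hh.contDiff.contDiffAt]
  exact Finset.sum_congr rfl fun k _ => by ring

lemma starProd_add_left_s2 (τ : ℂ) (p₁ p₂ q : ℂ[X]) :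
    starProd τ (p₁ + p₂) q = starProd τ p₁ q + starProd τ p₂ q :=
  Polynomial.funext fun w => by simp [eval_starProd, starPF_add_left]

lemma starProd_C (τ a : ℂ) (q : ℂ[X]) : starProd τ (C a) q = a • q :=
  Polynomial.funext fun w => by simp [eval_starProd, starPF_C]

lemma starProd_mul_X (τ : ℂ) (p q : ℂ[X]) :
    starProd τ (p * X) q = starProd τ p q * X + (τ / 2) • starProd τ p (derivative q) :=
  have hq : deriv (fun z => q.eval z) = fun z => (derivative q).eval z :=
    funext fun z => Polynomial.deriv q
  Polynomial.funext fun w => by simp [eval_starProd, starPF_mul_X, hq, mul_comm]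

lemma Differentiable.starPF (τ : ℂ) (q : ℂ[X]) {f : ℂ → ℂ} (hf : Differentiable ℂ f) :
    Differentiable ℂ (starPF τ q f) :=
  fun w => (hasDerivAt_starPF τ q hf w).differentiableAt

lemma deriv_starPF (τ : ℂ) (q : ℂ[X]) {f : ℂ → ℂ} (hf : Differentiable ℂ f) :
    deriv (starPF τ q f) = starPF τ (derivative q) f + starPF τ q (deriv f) :=
  funext fun w => (hasDerivAt_starPF τ q hf w).deriv

theorem starPF_starPF (τ : ℂ) (p q : ℂ[X]) {f : ℂ → ℂ} (hf : Differentiable ℂ f) :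
    starPF τ p (starPF τ q f) = starPF τ (starProd τ p q) f := by
  induction p using Polynomial.induction_on generalizing q f with
  | C a => rw [starPF_C, starProd_C, starPF_smul_left]
  | add p₁ p₂ ih₁ ih₂ =>
    rw [starPF_add_left, starProd_add_left_s2, starPF_add_left, ih₁ q hf, ih₂ q hf]
  | monomial n a ih =>
    have hf' := hf.deriv
    funext w
    rw [pow_succ, ← mul_assoc, starPF_mul_X, starProd_mul_X, starPF_add_left, Pi.add_apply,
      starPF_smul_left, Pi.smul_apply, smul_eq_mul, starPF_mul_X, deriv_starPF τ q hf,
      starPF_add_right τ _ (hf.starPF τ _) (hf'.starPF τ q), ih q hf,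
      ih (derivative q) hf, ih q hf']
    simp only [Pi.add_apply]
    ring

/-- Associativity of the `τ`-product when two of the three factors are polynomials:
`p *_τ (q *_τ f) = (p *_τ q) *_τ f`, `p *_τ (f *_τ q) = (p *_τ f) *_τ q`, and
`(f *_τ p) *_τ q = f *_τ (p *_τ q)` (recall `f *_τ p = p *_τ f` by the symmetry
of the defining formula). -/
theorem starPF_assoc (τ : ℂ) (p q : Polynomial ℂ) (f : ℂ → ℂ)
    (hf : Differentiable ℂ f) :
    starPF τ p (starPF τ q f) = starPF τ (starProd τ p q) f ∧
    starPF τ p (starPF τ q f) = starPF τ q (starPF τ p f) ∧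
    starPF τ q (starPF τ p f) = starPF τ (starProd τ p q) f := by
  have hqp : starPF τ q (starPF τ p f) = starPF τ (starProd τ p q) f := by
    rw [starPF_starPF τ q p hf, starProd_comm_s2]
  exact ⟨starPF_starPF τ p q hf, by rw [hqp, starPF_starPF τ p q hf], hqp⟩
end

section
/- Let ℓ ≥ 3 be an integer and τ ∈ ℂ with τ ≠ 0. Define P_m(w,τ) = ∑_{0 ≤ k ≤ ⌊m/2⌋} (m!/(4^k k! (m−2k)!)) τ^k w^{m−2k}. Then limsup_{n→∞} ( sup_{|w| ≤ 1} |P_{nℓ}(w,τ)| / n! )^{1/n} = ∞; consequently, for every t ≠ 0 the series ∑_{n≥0} (t^n/n!) P_{nℓ}(·,τ) fails to converge uniformly on the closed unit disk, i.e. the *-exponential e_*^{t w_*^ℓ} cannot be defined as a convergent power series in t. -/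
open Complex Filter

/-! At `w = 0` only the top term of `P_{2m}` survives: `P_{2m}(0,τ) = (2m)!/(4^m m!) τ^m`, which
is at least `(m|τ|/4)^m`. Along `n = 2j`, `m = jℓ ≥ 3j`, this outgrows `C^n n! ≤ (2jC)^{2j}` for
every `C`. So `|P_{nℓ}(0,τ)|/n! ≥ C^n` infinitely often, which bounds the supremum over the disk
from below and keeps the terms of the series at `w = 0` away from zero. -/

/-- `P_m(w,τ) = ∑_{0 ≤ k ≤ ⌊m/2⌋} (m!/(4^k k! (m−2k)!)) τ^k w^{m−2k}`, the
`τ`-expression `:w_*^m:_τ` of the `m`-th `*`-power of the generator. -/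
noncomputable def Ppoly (τ : ℂ) (m : ℕ) : ℂ → ℂ := fun w =>
  ∑ k ∈ Finset.range (m / 2 + 1),
    ((m.factorial : ℂ) / (4 ^ k * (k.factorial : ℂ) * ((m - 2 * k).factorial : ℂ))) *
      τ ^ k * w ^ (m - 2 * k)

open scoped ENNReal NNReal Topology

theorem IsCompact.le_biSup_of_continuousOn {α β : Type*} [ConditionallyCompleteLinearOrder α]
    [TopologicalSpace α] [ClosedIciTopology α] [TopologicalSpace β] {K : Set β} (hK : IsCompact K)
    {f : β → α} (hf : ContinuousOn f K) {x : β} (hx : x ∈ K) : f x ≤ ⨆ y ∈ K, f y := by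
  refine le_ciSup₂ (f := fun y (_ : y ∈ K) ↦ f y) ((hK.bddAbove_image hf).mono ?_) x hx
  simp only [Set.iUnion_subset_iff, Set.range_subset_iff]
  exact fun y hy ↦ Set.mem_image_of_mem f hy

theorem tendsto_zero_of_tendsto_sum_range {G : Type*} [AddCommGroup G] [TopologicalSpace G]
    [IsTopologicalAddGroup G] {f : ℕ → G} {a : G}
    (h : Tendsto (fun N ↦ ∑ i ∈ Finset.range N, f i) atTop (𝓝 a)) : Tendsto f atTop (𝓝 0) := by
  simpa [Function.comp_def, Finset.sum_range_succ] using
    (h.comp (tendsto_add_atTop_nat 1)).sub h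

theorem limsup_ofReal_rpow_one_div_eq_top {a : ℕ → ℝ}
    (h : ∀ C : ℝ≥0, ∃ᶠ n in atTop, (C : ℝ) ^ n ≤ a n) :
    limsup (fun n : ℕ ↦ ENNReal.ofReal (a n) ^ (1 / (n : ℝ))) atTop = ⊤ := by
  refine ENNReal.eq_top_of_forall_nnreal_le fun C ↦ le_limsup_of_frequently_le' ?_
  refine ((h C).and_eventually (eventually_ne_atTop 0)).mono fun n ⟨hCn, hn⟩ ↦ ?_
  calc (C : ℝ≥0∞) = (ENNReal.ofReal ((C : ℝ) ^ n)) ^ (1 / (n : ℝ)) := by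
        rw [ENNReal.ofReal_pow C.coe_nonneg, ENNReal.ofReal_coe_nnreal, one_div,
          ENNReal.pow_rpow_inv_natCast hn]
    _ ≤ ENNReal.ofReal (a n) ^ (1 / (n : ℝ)) := by gcongr

/-- `(2j)! C^{2j} ≤ (4j²C²)^j` is quadratic in `j` under the `j`-th power, while the right side is
at least `(3jr)^{3j}`, cubic under it: this is where `ℓ ≥ 3` enters. -/
theorem eventually_factorial_mul_pow_le_pow (C : ℝ) {r : ℝ} (hr : 0 < r) {ℓ : ℕ} (hℓ : 3 ≤ ℓ) :
    ∀ᶠ j : ℕ in atTop, ((2 * j).factorial : ℝ) * C ^ (2 * j) ≤ ((j * ℓ : ℕ) * r) ^ (j * ℓ) := by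
  have hj : Tendsto (fun j : ℕ ↦ (j : ℝ)) atTop atTop := tendsto_natCast_atTop_atTop
  filter_upwards [(hj.atTop_mul_const (by positivity : 0 < 3 * r)).eventually_ge_atTop 1,
    (hj.atTop_mul_const (by positivity : 0 < (3 * r) ^ 3)).eventually_ge_atTop (4 * C ^ 2)]
    with j hx hcube
  have hxℓ : (j : ℝ) * (3 * r) ≤ (j * ℓ : ℕ) * r := by
    push_cast
    have : (3 : ℝ) ≤ ℓ := by exact_mod_cast hℓ
    nlinarith [(by positivity : (0 : ℝ) ≤ j * r)]
  calc ((2 * j).factorial : ℝ) * C ^ (2 * j)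
      ≤ ((2 * j : ℕ) : ℝ) ^ (2 * j) * C ^ (2 * j) := by
        gcongr ?_ * _
        · exact (even_two_mul j).pow_nonneg C
        · exact_mod_cast Nat.factorial_le_pow _
    _ = ((2 * j * C) ^ 2) ^ j := by rw [← mul_pow, pow_mul]; push_cast; ring
    _ ≤ ((j * (3 * r)) ^ 3) ^ j := by
        gcongr
        nlinarith [mul_le_mul_of_nonneg_left hcube (sq_nonneg (j : ℝ))]
    _ = (j * (3 * r)) ^ (3 * j) := by rw [pow_mul]
    _ ≤ (j * (3 * r)) ^ (j * ℓ) := pow_le_pow_right₀ hx (by nlinarith)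
    _ ≤ ((j * ℓ : ℕ) * r) ^ (j * ℓ) := by gcongr

theorem continuous_Ppoly (τ : ℂ) (m : ℕ) : Continuous (Ppoly τ m) := by
  unfold Ppoly; fun_prop

theorem Ppoly_two_mul_zero (τ : ℂ) (m : ℕ) :
    Ppoly τ (2 * m) 0 = ((2 * m).factorial : ℂ) / (4 ^ m * (m.factorial : ℂ)) * τ ^ m := by
  rw [Ppoly, show 2 * m / 2 = m by omega, Finset.sum_eq_single_of_mem m (by simp)]
  · simp
  · intro k hk hkm
    have : 2 * k < 2 * m := by grind
    simp [Nat.sub_ne_zero_of_lt this]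

theorem pow_le_norm_Ppoly_two_mul_zero (τ : ℂ) (m : ℕ) :
    (m * (‖τ‖ / 4)) ^ m ≤ ‖Ppoly τ (2 * m) 0‖ := by
  have hfac : (m.factorial : ℝ) * (m + 1) ^ m ≤ (2 * m).factorial := by
    exact_mod_cast (two_mul m ▸ Nat.factorial_mul_pow_le_factorial)
  rw [Ppoly_two_mul_zero, norm_mul, norm_div, norm_mul]
  simp only [norm_pow, Complex.norm_natCast, Complex.norm_ofNat]
  rw [div_mul_eq_mul_div, le_div_iff₀ (by positivity)]
  calc (m * (‖τ‖ / 4)) ^ m * (4 ^ m * m.factorial)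
      = m.factorial * m ^ m * ‖τ‖ ^ m := by rw [mul_pow, div_pow]; field_simp
    _ ≤ m.factorial * (m + 1) ^ m * ‖τ‖ ^ m := by gcongr; linarith
    _ ≤ (2 * m).factorial * ‖τ‖ ^ m := by gcongr

theorem frequently_pow_mul_factorial_le_norm_Ppoly_zero {ℓ : ℕ} (hℓ : 3 ≤ ℓ) {τ : ℂ}
    (hτ : τ ≠ 0) (C : ℝ) :
    ∃ᶠ n in atTop, C ^ n * (n.factorial : ℝ) ≤ ‖Ppoly τ (n * ℓ) 0‖ := by
  refine (tendsto_id.const_mul_atTop' two_pos).frequently (Eventually.frequently ?_)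
  filter_upwards [eventually_factorial_mul_pow_le_pow C (by positivity : 0 < ‖τ‖ / 4) hℓ]
    with j hj
  rw [id, mul_assoc, mul_comm]
  exact hj.trans (pow_le_norm_Ppoly_two_mul_zero τ (j * ℓ))

/-- For `ℓ ≥ 3` and `τ ≠ 0`,
`limsup_n (sup_{|w|≤1} |P_{nℓ}(w,τ)| / n!)^{1/n} = ∞`; consequently for every `t ≠ 0`
the series `∑ (t^n/n!) P_{nℓ}(·,τ)` fails to converge uniformly on the closed unit
disk, i.e. `e_*^{t w_*^ℓ}` cannot be defined as a convergent power series in `t`. -/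
theorem starExp_power_ge_three_diverges (ℓ : ℕ) (hℓ : 3 ≤ ℓ) (τ : ℂ) (hτ : τ ≠ 0) :
    Filter.limsup (fun n : ℕ =>
        (ENNReal.ofReal
          ((⨆ w ∈ Metric.closedBall (0 : ℂ) 1, ‖Ppoly τ (n * ℓ) w‖) /
            (n.factorial : ℝ))) ^ (1 / (n : ℝ))) Filter.atTop = ⊤ ∧
    ∀ t : ℂ, t ≠ 0 →
      ¬ ∃ g : ℂ → ℂ, TendstoUniformlyOn
        (fun N : ℕ => fun w : ℂ =>
          ∑ n ∈ Finset.range N, t ^ n / (n.factorial : ℂ) * Ppoly τ (n * ℓ) w)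
        g Filter.atTop (Metric.closedBall (0 : ℂ) 1) := by
  have h0 : (0 : ℂ) ∈ Metric.closedBall 0 1 := Metric.mem_closedBall_self zero_le_one
  refine ⟨limsup_ofReal_rpow_one_div_eq_top fun C ↦ ?_, ?_⟩
  · refine (frequently_pow_mul_factorial_le_norm_Ppoly_zero hℓ hτ C).mono fun n hn ↦ ?_
    rw [le_div_iff₀ (by positivity)]
    exact hn.trans <| (isCompact_closedBall 0 1).le_biSup_of_continuousOn
      (continuous_Ppoly τ _).norm.continuousOn h0
  · rintro t ht ⟨g, hg⟩
    have hsmall := (tendsto_zero_of_tendsto_sum_range (hg.tendsto_at h0)).norm.eventually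
      (gt_mem_nhds (norm_zero.trans_lt one_pos))
    have hlarge : ∃ᶠ n in atTop, 1 ≤ ‖t ^ n / (n.factorial : ℂ) * Ppoly τ (n * ℓ) 0‖ := by
      refine (frequently_pow_mul_factorial_le_norm_Ppoly_zero hℓ hτ ‖t‖⁻¹).mono fun n hn ↦ ?_
      have ht' : 0 < ‖t‖ := norm_pos_iff.2 ht
      rw [norm_mul, norm_div, norm_pow, Complex.norm_natCast, div_mul_eq_mul_div,
        le_div_iff₀ (by positivity), one_mul]
      calc (n.factorial : ℝ) = ‖t‖ ^ n * (‖t‖⁻¹ ^ n * n.factorial) := by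
            rw [← mul_assoc, ← mul_pow, mul_inv_cancel₀ ht'.ne', one_pow, one_mul]
        _ ≤ ‖t‖ ^ n * ‖Ppoly τ (n * ℓ) 0‖ := by gcongr
    obtain ⟨n, hn_large, hn_small⟩ := (hlarge.and_eventually hsmall).exists
    exact hn_small.not_ge hn_large
end

section
/- Let τ ∈ ℂ with Re τ > 0. Suppose f : ℂ → ℂ is entire, satisfies f(w+π) = f(w) for all w ∈ ℂ, and satisfies e^{−τ} e^{2iw} f(w+iτ) = f(w) for all w ∈ ℂ. Then there exists a constant c ∈ ℂ such that f(w) = c ∑_{n∈ℤ} e^{−n²τ} e^{2niw} for all w ∈ ℂ, i.e. f = c·θ₃(·,τ). -/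
open Complex
open scoped Real
open Function

/-!
For every `n` the function `ζ ↦ f ζ * e^{-2inζ}` is entire and `π`-periodic, so by Cauchy's
theorem on a rectangle its integral over a horizontal period is the same on every horizontal line:
`f` has a single sequence of Fourier coefficients `c n`, valid on all horizontal lines.
Computing `c n` on the line through `iτ` with the functional equation gives
`c n = e^{(2n+1)τ} c (n+1)`, hence `c n = c 0 * e^{-n²τ}`. These coefficients decay like those of
a theta series, so the Fourier series of `f` on each horizontal line converges absolutely, and then
it converges to `f`.
-/

noncomputable def fourierMode (T : ℝ) (n : ℤ) (ζ : ℂ) : ℂ := cexp (2 * π * I * n * ζ / T)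

noncomputable def periodicFourierCoeff (T : ℝ) (g : ℂ → ℂ) (n : ℤ) : ℂ :=
  (T : ℂ)⁻¹ * ∫ t in (0 : ℝ)..T, fourierMode T (-n) t * g t

section FourierMode

variable {T : ℝ}

theorem differentiable_fourierMode (T : ℝ) (n : ℤ) : Differentiable ℂ (fourierMode T n) := by
  unfold fourierMode
  fun_prop

theorem fourierMode_add (n : ℤ) (ζ ξ : ℂ) :
    fourierMode T n (ζ + ξ) = fourierMode T n ζ * fourierMode T n ξ := by
  simp only [fourierMode, ← exp_add]
  ring_nf

theorem fourierMode_neg_mul_fourierMode (n : ℤ) (ζ : ℂ) :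
    fourierMode T (-n) ζ * fourierMode T n ζ = 1 := by
  simp only [fourierMode, ← exp_add, Int.cast_neg]
  ring_nf
  exact exp_zero

theorem fourierMode_periodic (hT : T ≠ 0) (n : ℤ) : Periodic (fourierMode T n) T := by
  have hT_mode : fourierMode T n T = 1 := by
    rw [fourierMode, ← exp_int_mul_two_pi_mul_I n]
    congr 1
    field_simp [ofReal_ne_zero.mpr hT]
  intro ζ
  rw [fourierMode_add, hT_mode, mul_one]

theorem fourier_coe_eq_fourierMode (n : ℤ) (x : ℝ) :
    fourier n (x : AddCircle T) = fourierMode T n x :=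
  fourier_coe_apply

theorem fourierMode_pi (n : ℤ) (ζ : ℂ) : fourierMode π n ζ = cexp (2 * n * I * ζ) := by
  rw [fourierMode]
  congr 1
  field_simp [ofReal_ne_zero.mpr Real.pi_ne_zero]

end FourierMode

namespace Function.Periodic

variable {T : ℝ} {g : ℂ → ℂ}

theorem comp_add_mul_I (hper : Periodic g T) (y : ℝ) :
    Periodic (fun t : ℝ => g (t + y * I)) T := fun t => by
  simpa [add_right_comm] using hper (t + y * I)

theorem intervalIntegral_comp_add_mul_I_eq (hper : Periodic g T) (hg : Differentiable ℂ g)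
    (y : ℝ) : ∫ t in (0 : ℝ)..T, g (t + y * I) = ∫ t in (0 : ℝ)..T, g t := by
  have hrect := integral_boundary_rect_eq_zero_of_differentiableOn g 0 (T + y * I)
    hg.differentiableOn
  have hsides : ∫ s in (0 : ℝ)..y, g (T + s * I) = ∫ s in (0 : ℝ)..y, g (s * I) := by
    refine intervalIntegral.integral_congr fun s _ => ?_
    simpa [add_comm] using hper (s * I)
  simp only [zero_re, zero_im, add_re, add_im, ofReal_re, ofReal_im, mul_re, mul_im, I_re, I_im,
    ofReal_zero, mul_zero, mul_one, sub_zero, zero_add, add_zero, zero_mul, hsides] at hrect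
  linear_combination -hrect

theorem intervalIntegral_comp_add_eq (hper : Periodic g T) (hg : Differentiable ℂ g) (z : ℂ) :
    ∫ t in (0 : ℝ)..T, g (t + z) = ∫ t in (0 : ℝ)..T, g t := by
  calc ∫ t in (0 : ℝ)..T, g (t + z)
      = ∫ t in (0 : ℝ)..T, g ((t + z.re : ℝ) + z.im * I) := by
        refine intervalIntegral.integral_congr fun t _ => congrArg g ?_
        push_cast
        linear_combination -(re_add_im z)
    _ = ∫ s in z.re..z.re + T, g (s + z.im * I) := by
        rw [intervalIntegral.integral_comp_add_right (fun s : ℝ => g (s + z.im * I)), zero_add,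
          add_comm T]
    _ = ∫ t in (0 : ℝ)..T, g t := by
        rw [(hper.comp_add_mul_I z.im).intervalIntegral_add_eq z.re 0, zero_add,
          hper.intervalIntegral_comp_add_mul_I_eq hg]

end Function.Periodic

section HorizontalLine

variable {T : ℝ} {g : ℂ → ℂ}

noncomputable def horizontalRestrict (hper : Periodic g T) (hg : Continuous g) (y : ℝ) :
    C(AddCircle T, ℂ) :=
  ⟨(hper.comp_add_mul_I y).lift, continuous_coinduced_dom.mpr (hg.comp (by fun_prop))⟩

theorem horizontalRestrict_coe (hper : Periodic g T) (hg : Continuous g) (y x : ℝ) :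
    horizontalRestrict hper hg y x = g (x + y * I) :=
  rfl

theorem fourierCoeff_horizontalRestrict [Fact (0 < T)] (hper : Periodic g T)
    (hg : Differentiable ℂ g) (y : ℝ) (n : ℤ) :
    fourierCoeff (horizontalRestrict hper hg.continuous y) n =
      periodicFourierCoeff T g n * fourierMode T n (y * I) := by
  have hmode (t : ℝ) : fourierMode T (-n) t =
      fourierMode T n (y * I) * fourierMode T (-n) (t + y * I) := by
    rw [fourierMode_add, mul_left_comm, mul_comm (fourierMode T n _),
      fourierMode_neg_mul_fourierMode, mul_one]
  have hshift := ((fourierMode_periodic (Fact.out : 0 < T).ne' (-n)).mul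
    hper).intervalIntegral_comp_add_mul_I_eq ((differentiable_fourierMode T (-n)).mul hg) y
  rw [fourierCoeff_eq_intervalIntegral _ n 0, zero_add, periodicFourierCoeff]
  simp only [Pi.mul_apply] at hshift
  simp only [smul_eq_mul, fourier_coe_eq_fourierMode, horizontalRestrict_coe]
  conv_lhs => simp only [hmode, mul_assoc]
  rw [intervalIntegral.integral_const_mul, hshift, real_smul]
  push_cast
  ring

theorem Function.Periodic.hasSum_periodicFourierCoeff_mul_fourierMode [Fact (0 < T)]
    (hper : Periodic g T) (hg : Differentiable ℂ g) (w : ℂ)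
    (hs : Summable fun n => periodicFourierCoeff T g n * fourierMode T n (w.im * I)) :
    HasSum (fun n => periodicFourierCoeff T g n * fourierMode T n w) (g w) := by
  have hline := has_pointwise_sum_fourier_series_of_summable
    (f := horizontalRestrict hper hg.continuous w.im)
    (by simpa only [← fourierCoeff_horizontalRestrict hper hg] using hs) (w.re : AddCircle T)
  rw [funext (fourierCoeff_horizontalRestrict hper hg w.im)] at hline
  simp only [horizontalRestrict_coe, re_add_im, smul_eq_mul, fourier_coe_eq_fourierMode, mul_assoc,
    ← fourierMode_add] at hline
  simpa only [add_comm _ (w.re : ℂ), re_add_im] using hline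

end HorizontalLine

theorem eq_mul_exp_neg_sq_of_eq_exp_mul_succ {a : ℤ → ℂ} {τ : ℂ}
    (h : ∀ n : ℤ, a n = cexp ((2 * n + 1) * τ) * a (n + 1)) (n : ℤ) :
    a n = a 0 * cexp (-n ^ 2 * τ) := by
  induction n using Int.induction_on with
  | zero => simp
  | succ k ih =>
    have hstep : a (k + 1) = cexp (-((2 * ((k : ℤ) : ℂ) + 1) * τ)) * a k := by
      rw [h k, exp_neg, inv_mul_cancel_left₀ (exp_ne_zero _)]
    rw [hstep, ih, mul_left_comm, ← exp_add]
    push_cast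
    ring_nf
  | pred k ih =>
    rw [h (-k - 1), sub_add_cancel, ih, mul_left_comm, ← exp_add]
    push_cast
    ring_nf

theorem summable_exp_neg_sq_mul_exp {τ : ℂ} (hτ : 0 < τ.re) (w : ℂ) :
    Summable fun n : ℤ => cexp (-(n : ℂ) ^ 2 * τ) * cexp (2 * n * I * w) := by
  have him : 0 < (I * τ / π).im := by
    simpa [div_ofReal_im] using div_pos hτ Real.pi_pos
  refine ((summable_jacobiTheta₂_term_iff (w / π) _).mpr him).congr fun n => ?_
  rw [jacobiTheta₂_term, ← exp_add]
  congr 1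
  field_simp [ofReal_ne_zero.mpr Real.pi_ne_zero]
  linear_combination (n : ℂ) ^ 2 * τ * I_sq

theorem periodicFourierCoeff_eq_exp_mul_succ {τ : ℂ} {f : ℂ → ℂ} (hf : Differentiable ℂ f)
    (hper : Periodic f π)
    (heq : ∀ w : ℂ, cexp (-τ) * cexp (2 * I * w) * f (w + I * τ) = f w) (n : ℤ) :
    periodicFourierCoeff π f n =
      cexp ((2 * n + 1) * τ) * periodicFourierCoeff π f (n + 1) := by
  have hshift (ζ : ℂ) : fourierMode π (-n) (ζ + I * τ) * f (ζ + I * τ) =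
      cexp ((2 * n + 1) * τ) * (fourierMode π (-(n + 1)) ζ * f ζ) := by
    have hexp : cexp (2 * ((-n : ℤ) : ℂ) * I * (ζ + I * τ)) = cexp ((2 * n + 1) * τ) *
        cexp (2 * ((-(n + 1) : ℤ) : ℂ) * I * ζ) * cexp (-τ) * cexp (2 * I * ζ) := by
      simp only [← exp_add]
      congr 1
      push_cast
      linear_combination -2 * (n : ℂ) * τ * I_sq
    rw [← heq ζ, fourierMode_pi, fourierMode_pi, hexp]
    ring
  have hline := ((fourierMode_periodic Real.pi_ne_zero (-n)).mul
    hper).intervalIntegral_comp_add_eq ((differentiable_fourierMode π (-n)).mul hf) (I * τ)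
  simp only [Pi.mul_apply, hshift, intervalIntegral.integral_const_mul] at hline
  rw [periodicFourierCoeff, periodicFourierCoeff, ← hline]
  ring

/-- For `Re τ > 0`: an entire function which is `π`-periodic and satisfies the
`τ`-expression `e^{−τ}e^{2iw} f(w+iτ) = f(w)` of `(e_*^{2iw} − 1) *_τ f = 0`
is a constant multiple of Jacobi's theta function
`θ₃(w,τ) = ∑_{n∈ℤ} e^{−n²τ} e^{2niw}`. -/
theorem eigenfunction_is_theta3 (τ : ℂ) (hτ : 0 < τ.re) (f : ℂ → ℂ)
    (hf : Differentiable ℂ f)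
    (hper : ∀ w : ℂ, f (w + (Real.pi : ℂ)) = f w)
    (heq : ∀ w : ℂ,
      Complex.exp (-τ) * Complex.exp (2 * Complex.I * w) * f (w + Complex.I * τ) = f w) :
    ∃ c : ℂ, ∀ w : ℂ, f w =
      c * ∑' n : ℤ, Complex.exp (-(n : ℂ) ^ 2 * τ) *
        Complex.exp (2 * (n : ℂ) * Complex.I * w) := by
  have : Fact (0 < π) := ⟨Real.pi_pos⟩
  set c := periodicFourierCoeff π f 0
  have hcoeff : ∀ n : ℤ, periodicFourierCoeff π f n = c * cexp (-(n : ℂ) ^ 2 * τ) :=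
    eq_mul_exp_neg_sq_of_eq_exp_mul_succ (periodicFourierCoeff_eq_exp_mul_succ hf hper heq)
  refine ⟨c, fun w => ?_⟩
  have hsum := Periodic.hasSum_periodicFourierCoeff_mul_fourierMode hper hf w (by
    simpa only [hcoeff, fourierMode_pi, mul_assoc c] using
      (summable_exp_neg_sq_mul_exp hτ (w.im * I)).mul_left c)
  simp only [hcoeff, fourierMode_pi, mul_assoc c] at hsum
  rw [← hsum.tsum_eq, tsum_mul_left]
end

section
/- Let τ ∈ ℂ with Re τ > 0, let T be a tempered distribution on ℝ, i.e. a continuous linear functional on the Schwartz space 𝒮(ℝ, ℂ), and let G : ℂ → 𝒮(ℝ, ℂ) be a map such that for every w ∈ ℂ and x ∈ ℝ, (G w)(x) = (1/√(πτ)) e^{−(x−w)²/τ} (such Schwartz functions exist since Re(1/τ) > 0). Then the function ℂ → ℂ, w ↦ T(G w), is entire (complex analytic on all of ℂ). -/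
/-!
Completing the square gives `e^{u²τ/4} G(uτ/2) = e^{ux} G 0`. The partial sums
`∑_{n<N} uⁿ/n! · xⁿ G 0` converge to this in every Schwartz seminorm: by Leibniz the error is
bounded by the exponential tail `(|u||x|)^M/M! · e^{|u||x|}` times derivatives of `G 0`, which are
polynomials times `e^{-x²/τ}`; half of that Gaussian turns the tail into `√(ρ^M/M!) → 0`, the other
half absorbs `|x|^k e^{|u||x|}`. By continuity of `T`, `u ↦ e^{u²τ/4} T(G(uτ/2))` is the sum of
the everywhere convergent power series `∑ T(xⁿ G 0)/n! · uⁿ`, hence entire, and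
`T(G w) = e^{-w²/τ}` times its value at `u = 2w/τ`.
-/

open Complex SchwartzMap Filter Topology Finset
open scoped Nat ContDiff

theorem Real.exp_sub_sum_range_le {t : ℝ} (ht : 0 ≤ t) (M : ℕ) :
    Real.exp t - ∑ n ∈ range M, t ^ n / n ! ≤ t ^ M / M ! * Real.exp t := by
  have hsum := Real.summable_pow_div_factorial t
  have hexp : Real.exp t = ∑' n, t ^ n / n ! := by
    rw [Real.exp_eq_exp_ℝ, NormedSpace.exp_eq_tsum_div]
  have htail : Real.exp t - ∑ n ∈ range M, t ^ n / n ! = ∑' n, t ^ (n + M) / (n + M)! := by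
    rw [hexp, ← hsum.sum_add_tsum_nat_add M, add_sub_cancel_left]
  rw [htail, hexp, ← tsum_mul_left]
  refine (hsum.comp_injective (add_left_injective M)).tsum_le_tsum (fun n => ?_)
    (hsum.mul_left _)
  have hfac : (M ! * n ! : ℝ) ≤ (n + M)! := by
    exact_mod_cast Nat.le_of_dvd (Nat.factorial_pos _) (add_comm M n ▸
      Nat.factorial_mul_factorial_dvd_factorial_add M n)
  rw [pow_add, div_mul_div_comm, mul_comm (t ^ n)]
  gcongr

theorem Complex.norm_exp_sub_sum_range_le (y : ℂ) (M : ℕ) :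
    ‖exp y - ∑ n ∈ range M, y ^ n / (n ! : ℂ)‖ ≤ ‖y‖ ^ M / M ! * Real.exp ‖y‖ :=
  (norm_exp_sub_sum_le_exp_norm_sub_sum y M).trans (Real.exp_sub_sum_range_le (norm_nonneg y) M)

theorem pow_div_factorial_mul_exp_neg_sq_le (a t : ℝ) {γ : ℝ} (hγ : 0 < γ) (M : ℕ) :
    (a * t) ^ M / M ! * Real.exp (-(γ * t ^ 2)) ≤ √((a ^ 2 / (2 * γ)) ^ M / M !) := by
  apply Real.le_sqrt_of_sq_le
  have hexp := Real.pow_div_factorial_le_exp (2 * γ * t ^ 2) (by positivity) M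
  calc ((a * t) ^ M / M ! * Real.exp (-(γ * t ^ 2))) ^ 2
      = (a ^ 2 / (2 * γ)) ^ M / M ! *
          ((2 * γ * t ^ 2) ^ M / M ! * Real.exp (-(2 * γ * t ^ 2))) := by
        have : Real.exp (-(γ * t ^ 2)) ^ 2 = Real.exp (-(2 * γ * t ^ 2)) := by
          rw [← Real.exp_nat_mul]; push_cast; ring_nf
        rw [mul_pow, this, div_pow, mul_pow, mul_pow, div_pow, mul_pow, ← pow_mul, ← pow_mul]
        field_simp
        ring
    _ ≤ (a ^ 2 / (2 * γ)) ^ M / M ! * 1 := by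
        gcongr
        rwa [Real.exp_neg, ← div_eq_mul_inv, div_le_one (Real.exp_pos _)]
    _ = _ := mul_one _

theorem exists_pow_mul_exp_mul_exp_neg_sq_le (k : ℕ) (R : ℝ) {γ : ℝ} (hγ : 0 < γ) :
    ∃ D, ∀ t, 0 ≤ t → t ^ k * Real.exp (R * t) * Real.exp (-(γ * t ^ 2)) ≤ D := by
  refine ⟨k ! * √((1 / γ) ^ k / k !) * Real.exp (R ^ 2 / (2 * γ)), fun t ht => ?_⟩
  have hsplit : Real.exp (R * t) * Real.exp (-(γ * t ^ 2)) ≤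
      Real.exp (R ^ 2 / (2 * γ)) * Real.exp (-(γ / 2 * t ^ 2)) := by
    rw [← Real.exp_add, ← Real.exp_add, Real.exp_le_exp]
    have : R * t ≤ R ^ 2 / (2 * γ) + γ / 2 * t ^ 2 := by
      rw [div_add' _ _ _ (by positivity), le_div_iff₀ (by positivity)]
      nlinarith [sq_nonneg (R - γ * t)]
    linarith
  have hpow := pow_div_factorial_mul_exp_neg_sq_le 1 t (half_pos hγ) k
  rw [one_mul, div_mul_eq_mul_div, div_le_iff₀ (by positivity), one_pow,
    show 2 * (γ / 2) = γ by ring] at hpow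
  calc t ^ k * Real.exp (R * t) * Real.exp (-(γ * t ^ 2))
      ≤ t ^ k * (Real.exp (R ^ 2 / (2 * γ)) * Real.exp (-(γ / 2 * t ^ 2))) := by
        rw [mul_assoc]; gcongr
    _ = t ^ k * Real.exp (-(γ / 2 * t ^ 2)) * Real.exp (R ^ 2 / (2 * γ)) := by ring
    _ ≤ _ := by
        rw [mul_comm (k ! : ℝ)]
        gcongr

theorem tendsto_sqrt_pow_div_factorial (ρ : ℝ) :
    Tendsto (fun M : ℕ => √(ρ ^ M / M !)) atTop (𝓝 0) :=
  Real.sqrt_zero ▸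
    (Real.continuous_sqrt.tendsto 0).comp (FloorSemiring.tendsto_pow_div_factorial_atTop ρ)

noncomputable def expTail (N : ℕ) (y : ℂ) : ℂ := exp y - ∑ n ∈ range N, y ^ n / n !

theorem hasDerivAt_expTail_succ (N : ℕ) (y : ℂ) :
    HasDerivAt (expTail (N + 1)) (expTail N y) y := by
  have hterm (n : ℕ) : HasDerivAt (fun y : ℂ => y ^ (n + 1) / (n + 1)!) (y ^ n / n !) y := by
    refine ((hasDerivAt_pow (n + 1) y).div_const ((n + 1)! : ℂ)).congr_deriv ?_
    rw [Nat.factorial_succ, add_tsub_cancel_right]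
    push_cast
    field_simp
  have hexpand :
      expTail (N + 1) = fun y => exp y - (∑ n ∈ range N, y ^ (n + 1) / (n + 1)! + 1) := by
    funext y
    simp [expTail, sum_range_succ']
  rw [hexpand]
  exact ((hasDerivAt_exp y).sub ((HasDerivAt.fun_sum fun n _ => hterm n).add_const 1)).congr_deriv
    (by simp [expTail])

theorem contDiff_expTail (N : ℕ) : ContDiff ℂ ⊤ (expTail N) :=
  contDiff_exp.sub (ContDiff.sum fun n _ => (contDiff_id.pow n).div_const _)

theorem contDiff_expTail_comp_mul (N : ℕ) (z : ℂ) :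
    ContDiff ℝ ⊤ (fun x : ℝ => expTail N (z * x)) :=
  ((contDiff_expTail N).restrict_scalars ℝ).comp (contDiff_const.mul ofRealCLM.contDiff)

theorem iteratedDeriv_expTail_comp_mul (z : ℂ) {i N : ℕ} (h : i ≤ N) :
    iteratedDeriv i (fun x : ℝ => expTail N (z * x)) =
      fun x : ℝ => z ^ i * expTail (N - i) (z * x) := by
  induction i with
  | zero => simp
  | succ i ih =>
    rw [iteratedDeriv_succ, ih (by omega)]
    funext x
    obtain ⟨j, hj⟩ : ∃ j, N - i = j + 1 := ⟨N - (i + 1), by omega⟩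
    have hd : HasDerivAt (fun y : ℂ => z ^ i * expTail (j + 1) (z * y))
        (z ^ i * (expTail j (z * x) * z)) x :=
      (((hasDerivAt_expTail_succ j _).comp _ ((hasDerivAt_id _).const_mul z)).congr_deriv
        (by simp)).const_mul _
    rw [hj, hd.comp_ofReal.deriv, Nat.sub_succ, hj, Nat.pred_succ, pow_succ]
    ring

theorem norm_iteratedDeriv_expTail_comp_mul_le (z : ℂ) {i N : ℕ} (h : i ≤ N) (x : ℝ) :
    ‖iteratedDeriv i (fun x : ℝ => expTail N (z * x)) x‖ ≤
      ‖z‖ ^ i * ((‖z‖ * ‖x‖) ^ (N - i) / (N - i)! * Real.exp (‖z‖ * ‖x‖)) := by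
  have hzx : ‖z * x‖ = ‖z‖ * ‖x‖ := by rw [norm_mul, Complex.norm_real]
  rw [iteratedDeriv_expTail_comp_mul z h, norm_mul, norm_pow, ← hzx]
  gcongr
  exact Complex.norm_exp_sub_sum_range_le _ _

def HasGaussianBoundedDerivs (β : ℝ) (g : ℝ → ℂ) : Prop :=
  ∀ j, ∃ C, ∀ x, ‖iteratedDeriv j g x‖ ≤ C * Real.exp (-(β * ‖x‖ ^ 2))

theorem norm_cexp_neg_sq_div (τ : ℂ) (x : ℝ) :
    ‖exp (-(x : ℂ) ^ 2 / τ)‖ = Real.exp (-(τ⁻¹.re * ‖x‖ ^ 2)) := by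
  rw [Complex.norm_exp, Real.norm_eq_abs, sq_abs, div_eq_mul_inv, ← Complex.ofReal_pow,
    ← Complex.ofReal_neg, Complex.re_ofReal_mul]
  ring_nf

theorem iteratedDeriv_mul_cexp_neg_sq_div (c τ : ℂ) (j : ℕ) :
    ∃ p : Polynomial ℂ, iteratedDeriv j (fun x : ℝ => c * exp (-(x : ℂ) ^ 2 / τ)) =
      fun x : ℝ => p.eval (x : ℂ) * exp (-(x : ℂ) ^ 2 / τ) := by
  induction j with
  | zero => exact ⟨Polynomial.C c, by simp⟩
  | succ j ih =>
    obtain ⟨p, hp⟩ := ih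
    refine ⟨p.derivative + p * (Polynomial.C (-2 / τ) * Polynomial.X), ?_⟩
    rw [iteratedDeriv_succ, hp]
    funext x
    have hd : HasDerivAt (fun y : ℂ => p.eval y * exp (-y ^ 2 / τ))
        ((p.derivative + p * (Polynomial.C (-2 / τ) * Polynomial.X)).eval (x : ℂ) *
          exp (-(x : ℂ) ^ 2 / τ)) x := by
      refine ((p.hasDerivAt _).mul (((hasDerivAt_pow 2 _).neg.div_const τ).cexp)).congr_deriv ?_
      simp only [Polynomial.eval_add, Polynomial.eval_mul, Polynomial.eval_C, Polynomial.eval_X]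
      ring
    exact hd.comp_ofReal.deriv

theorem hasGaussianBoundedDerivs_mul_cexp_neg_sq_div (c τ : ℂ) (hτ : 0 < τ⁻¹.re) :
    HasGaussianBoundedDerivs (τ⁻¹.re / 2) (fun x : ℝ => c * exp (-(x : ℂ) ^ 2 / τ)) := by
  intro j
  set α := τ⁻¹.re
  obtain ⟨p, hp⟩ := iteratedDeriv_mul_cexp_neg_sq_div c τ j
  choose D hD using fun i => exists_pow_mul_exp_mul_exp_neg_sq_le i 0 (half_pos hτ)
  refine ⟨∑ i ∈ range (p.natDegree + 1), ‖p.coeff i‖ * D i, fun x => ?_⟩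
  have hmono (i : ℕ) : ‖x‖ ^ i * Real.exp (-(α * ‖x‖ ^ 2)) ≤
      D i * Real.exp (-(α / 2 * ‖x‖ ^ 2)) := by
    have := hD i ‖x‖ (norm_nonneg x)
    rw [zero_mul, Real.exp_zero, mul_one] at this
    calc ‖x‖ ^ i * Real.exp (-(α * ‖x‖ ^ 2))
        = ‖x‖ ^ i * Real.exp (-(α / 2 * ‖x‖ ^ 2)) * Real.exp (-(α / 2 * ‖x‖ ^ 2)) := by
          rw [mul_assoc, ← Real.exp_add]; ring_nf
      _ ≤ _ := by gcongr
  rw [hp, norm_mul, norm_cexp_neg_sq_div, Polynomial.eval_eq_sum_range, sum_mul]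
  refine (mul_le_mul_of_nonneg_right (norm_sum_le _ _) (Real.exp_pos _).le).trans ?_
  rw [sum_mul]
  refine sum_le_sum fun i _ => ?_
  rw [norm_mul, norm_pow, Complex.norm_real, mul_assoc, mul_assoc]
  exact mul_le_mul_of_nonneg_left (hmono i) (norm_nonneg _)

theorem norm_iteratedDeriv_expTail_mul_le {g : ℝ → ℂ} {β : ℝ} (hβ : 0 < β) (z : ℂ)
    {i j N k : ℕ} (hiN : i ≤ N) {C D : ℝ}
    (hC : ∀ x, ‖iteratedDeriv j g x‖ ≤ C * Real.exp (-(β * ‖x‖ ^ 2)))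
    (hD : ∀ t, 0 ≤ t → t ^ k * Real.exp (‖z‖ * t) * Real.exp (-(β / 2 * t ^ 2)) ≤ D) (x : ℝ) :
    ‖x‖ ^ k * (‖iteratedDeriv i (fun x : ℝ => expTail N (z * x)) x‖ * ‖iteratedDeriv j g x‖) ≤
      ‖z‖ ^ i * C * D * √((‖z‖ ^ 2 / β) ^ (N - i) / (N - i)!) := by
  have hC0 : 0 ≤ C := nonneg_of_mul_nonneg_left ((norm_nonneg _).trans (hC 0)) (Real.exp_pos _)
  have hgauss := pow_div_factorial_mul_exp_neg_sq_le ‖z‖ ‖x‖ (half_pos hβ) (N - i)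
  rw [show 2 * (β / 2) = β by ring] at hgauss
  have hsplit : Real.exp (-(β * ‖x‖ ^ 2)) =
      Real.exp (-(β / 2 * ‖x‖ ^ 2)) * Real.exp (-(β / 2 * ‖x‖ ^ 2)) := by
    rw [← Real.exp_add]; ring_nf
  calc ‖x‖ ^ k * (‖iteratedDeriv i (fun x : ℝ => expTail N (z * x)) x‖ * ‖iteratedDeriv j g x‖)
      ≤ ‖x‖ ^ k * (‖z‖ ^ i * ((‖z‖ * ‖x‖) ^ (N - i) / (N - i)! * Real.exp (‖z‖ * ‖x‖)) *
          (C * Real.exp (-(β * ‖x‖ ^ 2)))) := by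
        gcongr
        exacts [norm_iteratedDeriv_expTail_comp_mul_le z hiN x, hC x]
    _ = ‖z‖ ^ i * C *
          ((‖z‖ * ‖x‖) ^ (N - i) / (N - i)! * Real.exp (-(β / 2 * ‖x‖ ^ 2))) *
          (‖x‖ ^ k * Real.exp (‖z‖ * ‖x‖) * Real.exp (-(β / 2 * ‖x‖ ^ 2))) := by
        rw [hsplit]; ring
    _ ≤ ‖z‖ ^ i * C * √((‖z‖ ^ 2 / β) ^ (N - i) / (N - i)!) * D := by
        gcongr
        exact hD _ (norm_nonneg x)
    _ = _ := by ring

theorem exists_bound_iteratedFDeriv_expTail_mul {g : ℝ → ℂ} {β : ℝ} (hβ : 0 < β)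
    (hg_smooth : ContDiff ℝ ∞ g) (hg : HasGaussianBoundedDerivs β g) (z : ℂ) (k m : ℕ) :
    ∃ B : ℕ → ℝ, Tendsto B atTop (𝓝 0) ∧ ∀ N, m ≤ N → ∀ x : ℝ,
      ‖x‖ ^ k * ‖iteratedFDeriv ℝ m (fun x : ℝ => expTail N (z * x) * g x) x‖ ≤ B N := by
  choose C hC using hg
  obtain ⟨D, hD⟩ := exists_pow_mul_exp_mul_exp_neg_sq_le k ‖z‖ (half_pos hβ)
  refine ⟨fun N => ∑ i ∈ range (m + 1),
    m.choose i * (‖z‖ ^ i * C (m - i) * D * √((‖z‖ ^ 2 / β) ^ (N - i) / (N - i)!)),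
    ?_, fun N hN x => ?_⟩
  · have hb := tendsto_sqrt_pow_div_factorial (‖z‖ ^ 2 / β)
    simpa only [mul_zero, sum_const_zero, Function.comp_def] using
      tendsto_finsetSum (range (m + 1)) fun i _ =>
        ((hb.comp (tendsto_sub_atTop_nat i)).const_mul (‖z‖ ^ i * C (m - i) * D)).const_mul
          (m.choose i : ℝ)
  have hleib := norm_iteratedFDeriv_mul_le ((contDiff_expTail_comp_mul N z).of_le le_top)
    (hg_smooth.of_le (by exact_mod_cast le_top)) x (le_refl (m : ℕ∞ω))
  refine (mul_le_mul_of_nonneg_left hleib (by positivity)).trans ?_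
  rw [mul_sum]
  refine sum_le_sum fun i hi => ?_
  have hiN : i ≤ N := (Nat.lt_succ_iff.mp (mem_range.mp hi)).trans hN
  simp only [norm_iteratedFDeriv_eq_norm_iteratedDeriv]
  calc ‖x‖ ^ k * (m.choose i * ‖iteratedDeriv i (fun x : ℝ => expTail N (z * x)) x‖ *
        ‖iteratedDeriv (m - i) g x‖)
      = m.choose i * (‖x‖ ^ k * (‖iteratedDeriv i (fun x : ℝ => expTail N (z * x)) x‖ *
        ‖iteratedDeriv (m - i) g x‖)) := by ring
    _ ≤ _ := mul_le_mul_of_nonneg_left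
      (norm_iteratedDeriv_expTail_mul_le hβ z hiN (hC (m - i)) hD x) (Nat.cast_nonneg _)

theorem tendsto_sum_pow_div_factorial_smul {β : ℝ} (hβ : 0 < β) (g : 𝓢(ℝ, ℂ))
    (hg : HasGaussianBoundedDerivs β g) (z : ℂ) {f : ℕ → 𝓢(ℝ, ℂ)}
    (hf : ∀ n x, f n x = (x : ℂ) ^ n * g x) {h : 𝓢(ℝ, ℂ)} (hh : ∀ x, h x = exp (z * x) * g x) :
    Tendsto (fun N => ∑ n ∈ range N, (z ^ n / n !) • f n) atTop (𝓝 h) := by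
  rw [(schwartz_withSeminorms ℝ ℝ ℂ).tendsto_nhds _ h]
  rintro ⟨k, m⟩ ε hε
  obtain ⟨B, hB, hbound⟩ := exists_bound_iteratedFDeriv_expTail_mul hβ (g.smooth ⊤) hg z k m
  have hsub (N : ℕ) : ⇑(∑ n ∈ range N, (z ^ n / n !) • f n - h) =
      -fun x : ℝ => expTail N (z * x) * g x := by
    funext x
    simp only [sub_apply, _root_.sum_apply, smul_apply, smul_eq_mul, hf, hh, expTail,
      Pi.neg_apply, sub_mul, sum_mul, neg_sub, mul_pow]
    congr 1
    refine sum_congr rfl fun n _ => ?_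
    ring
  filter_upwards [eventually_ge_atTop m, hB.eventually (gt_mem_nhds hε)] with N hN hBε
  refine lt_of_le_of_lt (seminorm_le_bound ℝ k m _ ?_ fun x => ?_) hBε
  · exact (by positivity : (0 : ℝ) ≤ ‖(0 : ℝ)‖ ^ k * _).trans (hbound N hN 0)
  · rw [hsub, iteratedFDeriv_neg_apply, norm_neg]
    exact hbound N hN x

theorem differentiable_of_tendsto_sum_range_mul_pow {𝕜 : Type*} [RCLike 𝕜] {a : ℕ → 𝕜}
    {F : 𝕜 → 𝕜} (h : ∀ z, Tendsto (fun N => ∑ n ∈ range N, a n * z ^ n) atTop (𝓝 (F z))) :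
    Differentiable 𝕜 F := by
  set p := FormalMultilinearSeries.ofScalars 𝕜 a
  have hp (n : ℕ) (z : 𝕜) : p n (fun _ => z) = a n * z ^ n := by simp [p, mul_comm]
  have hterm (z : 𝕜) : Tendsto (fun n => a n * z ^ n) atTop (𝓝 0) := by
    simpa [sum_range_succ_sub_sum] using ((h z).comp (tendsto_add_atTop_nat 1)).sub (h z)
  have hrad : p.radius = ⊤ := ENNReal.eq_top_of_forall_nnreal_le fun r =>
    p.le_radius_of_tendsto (l := 0) <| by
      simpa [p, FormalMultilinearSeries.ofScalars_norm] using (hterm ((r : ℝ) : 𝕜)).norm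
  have hmem (z : 𝕜) : z ∈ Metric.eball (0 : 𝕜) p.radius := by simp [hrad]
  have hF : F = p.sum := funext fun z => tendsto_nhds_unique (h z) <| by
    simpa only [hp] using (p.hasSum (hmem z)).tendsto_sum_nat
  rw [hF]
  exact fun z => ((p.hasFPowerSeriesOnBall (hrad ▸ ENNReal.zero_lt_top)).analyticAt_of_mem
    (hmem z)).differentiableAt

theorem smulLeftCLM_ofReal_pow_apply (n : ℕ) (f : 𝓢(ℝ, ℂ)) (x : ℝ) :
    (smulLeftCLM ℂ (fun x : ℝ => (x : ℂ)) ^ n) f x = (x : ℂ) ^ n * f x := by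
  induction n with
  | zero => simp
  | succ n ih =>
    rw [pow_succ', mul_apply_eq_comp, smulLeftCLM_apply_apply (by fun_prop), ih,
      smul_eq_mul, pow_succ']
    ring

/-- For `Re τ > 0`, pairing a tempered distribution `T` on `ℝ` with the Gaussian
family `w ↦ (1/√(πτ)) e^{−(x−w)²/τ}` (the `τ`-expression of `δ_*(x−w)`, a Schwartz
function of `x` for each fixed `w ∈ ℂ`) yields an entire function of `w`. -/
theorem tempered_pairing_entire (τ : ℂ) (hτ : 0 < τ.re)
    (T : SchwartzMap ℝ ℂ →L[ℂ] ℂ) (G : ℂ → SchwartzMap ℝ ℂ)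
    (hG : ∀ (w : ℂ) (x : ℝ), G w x =
      (1 / ((Real.pi : ℂ) * τ) ^ (1 / 2 : ℂ)) * Complex.exp (-((x : ℂ) - w) ^ 2 / τ)) :
    Differentiable ℂ fun w : ℂ => T (G w) := by
  have hτ0 : τ ≠ 0 := by rintro rfl; simp at hτ
  have hα : 0 < τ⁻¹.re := by rw [inv_re]; exact div_pos hτ (normSq_pos.2 hτ0)
  set X := smulLeftCLM ℂ (fun x : ℝ => (x : ℂ))
  -- completing the square
  have hshift (u : ℂ) (x : ℝ) :
      (exp (u ^ 2 * τ / 4) • G (u * τ / 2)) x = exp (u * x) * G 0 x := by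
    rw [smul_apply, hG, hG, smul_eq_mul, mul_left_comm, mul_left_comm (exp _), ← exp_add,
      ← exp_add]
    congr 2
    field_simp
    ring
  have hconv (u : ℂ) : Tendsto (fun N => ∑ n ∈ range N, T ((X ^ n) (G 0)) / n ! * u ^ n) atTop
      (𝓝 (T (exp (u ^ 2 * τ / 4) • G (u * τ / 2)))) := by
    refine ((T.continuous.tendsto _).comp (tendsto_sum_pow_div_factorial_smul (half_pos hα) (G 0)
      ?_ u (smulLeftCLM_ofReal_pow_apply · (G 0)) (hshift u))).congr fun N => ?_
    · have hG0 : ⇑(G 0) = fun x : ℝ => _ := funext (hG 0)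
      simpa only [hG0, sub_zero] using hasGaussianBoundedDerivs_mul_cexp_neg_sq_div _ τ hα
    · simp only [Function.comp_apply, map_sum, map_smul, smul_eq_mul]
      exact sum_congr rfl fun n _ => by ring
  have hF := differentiable_of_tendsto_sum_range_mul_pow hconv
  have hpair (w : ℂ) : T (G w) =
      exp (-w ^ 2 / τ) * T (exp ((2 * w / τ) ^ 2 * τ / 4) • G (2 * w / τ * τ / 2)) := by
    have hexp : -w ^ 2 / τ + (2 * w / τ) ^ 2 * τ / 4 = 0 := by field_simp; ring
    rw [map_smul, smul_eq_mul, ← mul_assoc, ← exp_add, hexp, exp_zero, one_mul,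
      show 2 * w / τ * τ / 2 = w by field_simp]
  rw [funext hpair]
  exact ((differentiable_id.pow 2).neg.div_const τ).cexp.mul
    (hF.comp ((differentiable_id.const_mul 2).div_const τ))
end

section
/- Let τ ∈ ℂ with τ ≠ 0 and α ∈ ℂ, and set g(w) = e^{−(w+α)²/τ}. Then g is an eigenfunction of the *_τ-multiplication by w_*² with eigenvalue α²: for all w ∈ ℂ, (τ²/4) g″(w) + τ w g′(w) + (w² + τ/2) g(w) = α² g(w). Consequently, for every t ∈ ℂ, the function (t,w) ↦ e^{tα²} g(w) is entire in t and solves the evolution equation ∂_t f = (τ²/4) ∂_w² f + τ w ∂_w f + (w² + τ/2) f with initial value g; i.e. :e_*^{t w_*²}:_τ *_τ :δ_*(w+α):_τ = e^{tα²} :δ_*(w+α):_τ, so e_*^{t w_*²} acts on δ_*(w+α) as a genuine one-parameter group without singularities. -/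
/-! With `g' = -2(w+α)/τ · g` and `g'' = (4(w+α)²/τ² - 2/τ) · g`, the `τ`-product by `w_*²`
multiplies `g` by `(w+α)² - τ/2 - 2w(w+α) + w² + τ/2 = α²`. Multiplying this eigenfunction by
`e^{tα²}` therefore makes its `t`-derivative equal to the `τ`-product applied to it. -/

open Complex

/-- `g(w) = e^{−(w+α)²/τ}`, a nonzero multiple of the `τ`-expression of the
`*`-delta function `δ_*(w+α)`. -/
noncomputable def deltaGauss (τ α : ℂ) : ℂ → ℂ := fun w =>
  Complex.exp (-(w + α) ^ 2 / τ)

lemma hasDerivAt_deltaGauss (τ α w : ℂ) :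
    HasDerivAt (deltaGauss τ α) (-2 * (w + α) / τ * deltaGauss τ α w) w := by
  have hexponent : HasDerivAt (fun w : ℂ => -(w + α) ^ 2 / τ) (-2 * (w + α) / τ) w := by
    simpa [neg_div, mul_comm] using ((((hasDerivAt_id w).add_const α).fun_pow 2).neg.div_const τ)
  rw [mul_comm]
  exact hexponent.cexp

lemma deriv_deltaGauss (τ α : ℂ) :
    deriv (deltaGauss τ α) = fun w => -2 * (w + α) / τ * deltaGauss τ α w :=
  funext fun w => (hasDerivAt_deltaGauss τ α w).deriv

lemma deriv_deriv_deltaGauss (τ α w : ℂ) :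
    deriv (deriv (deltaGauss τ α)) w =
      (-2 / τ + 4 * (w + α) ^ 2 / τ ^ 2) * deltaGauss τ α w := by
  have hfactor : HasDerivAt (fun w : ℂ => -2 * (w + α) / τ) (-2 / τ) w := by
    simpa using (((hasDerivAt_id w).add_const α).const_mul (-2)).div_const τ
  rw [deriv_deltaGauss, (hfactor.fun_mul (hasDerivAt_deltaGauss τ α w)).deriv]
  ring

theorem deltaGauss_eigen_equation {τ : ℂ} (hτ : τ ≠ 0) (α w : ℂ) :
    τ ^ 2 / 4 * deriv (deriv (deltaGauss τ α)) w +
        τ * w * deriv (deltaGauss τ α) w + (w ^ 2 + τ / 2) * deltaGauss τ α w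
      = α ^ 2 * deltaGauss τ α w := by
  rw [deriv_deriv_deltaGauss, deriv_deltaGauss]
  field_simp
  ring

lemma hasDerivAt_cexp_mul_const (c t : ℂ) :
    HasDerivAt (fun t => Complex.exp (t * c)) (c * Complex.exp (t * c)) t := by
  simpa [mul_comm] using ((hasDerivAt_id t).mul_const c).cexp

/-- For `τ ≠ 0`: `g` is an eigenfunction of `*_τ`-multiplication by `w_*²` with
eigenvalue `α²`, and `(t,w) ↦ e^{tα²} g(w)` is entire in `t`, equals `g` at `t = 0`,
and solves `∂_t f = (τ²/4) ∂_w² f + τ w ∂_w f + (w² + τ/2) f`, i.e.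
`:e_*^{t w_*²}:_τ *_τ :δ_*(w+α):_τ = e^{tα²} :δ_*(w+α):_τ` as a genuine
one-parameter group without singularities. -/
theorem starExpQuad_acts_on_delta (τ : ℂ) (hτ : τ ≠ 0) (α : ℂ) :
    (∀ w : ℂ,
      τ ^ 2 / 4 * deriv (deriv (deltaGauss τ α)) w +
        τ * w * deriv (deltaGauss τ α) w + (w ^ 2 + τ / 2) * deltaGauss τ α w
      = α ^ 2 * deltaGauss τ α w) ∧
    (∀ w : ℂ, Differentiable ℂ fun t : ℂ => Complex.exp (t * α ^ 2) * deltaGauss τ α w) ∧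
    (∀ w : ℂ, Complex.exp ((0 : ℂ) * α ^ 2) * deltaGauss τ α w = deltaGauss τ α w) ∧
    (∀ t w : ℂ,
      deriv (fun t' : ℂ => Complex.exp (t' * α ^ 2) * deltaGauss τ α w) t =
        τ ^ 2 / 4 * (Complex.exp (t * α ^ 2) * deriv (deriv (deltaGauss τ α)) w) +
          τ * w * (Complex.exp (t * α ^ 2) * deriv (deltaGauss τ α) w) +
          (w ^ 2 + τ / 2) * (Complex.exp (t * α ^ 2) * deltaGauss τ α w)) := by
  refine ⟨deltaGauss_eigen_equation hτ α, fun w => by fun_prop, fun w => by simp, fun t w => ?_⟩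
  rw [((hasDerivAt_cexp_mul_const (α ^ 2) t).mul_const (deltaGauss τ α w)).deriv]
  linear_combination -Complex.exp (t * α ^ 2) * deltaGauss_eigen_equation hτ α w
end

section
/- Let τ ∈ ℂ with τ ≠ 0 and α ∈ ℂ with α ≠ 0. An entire function f : ℂ → ℂ satisfies the equation (τ²/4) f″(w) + τ w f′(w) + (w² + τ/2) f(w) = α² f(w) for all w ∈ ℂ if and only if there exist (necessarily unique) constants a, b ∈ ℂ such that f(w) = a e^{−(w+α)²/τ} + b e^{−(w−α)²/τ} for all w. In particular, the solution is uniquely determined by the boundary data f(0) and f′(0). -/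
open Complex

/-!
Conjugating by a Gaussian, `h = e^{w²/τ} f`, removes the first-order term: the equation becomes
`h'' = c² h` with `c = 2α/τ`, whose solutions are the combinations of `e^{cw}` and `e^{-cw}`
determined by `h(0) = f(0)` and `h'(0) = f'(0)`. Multiplying back by `e^{-w²/τ}` turns
`e^{±cw}` into multiples of the Gaussians `e^{-(w ∓ α)²/τ}`. The coefficients are unique because
`e^{cw}` and `e^{-cw}` are linearly independent for `c ≠ 0`, as comparing `w = 0` with
`w = iπ/(2c)` shows.
-/

/-- The `τ`-expression of `(α² − w_*²) * f = 0`. -/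
def IsQuadraticEigenfunction (τ α : ℂ) (f : ℂ → ℂ) : Prop :=
  ∀ w, τ ^ 2 / 4 * deriv (deriv f) w + τ * w * deriv f w + (w ^ 2 + τ / 2) * f w = α ^ 2 * f w

theorem hasDerivAt_cexp_const_mul (c w : ℂ) :
    HasDerivAt (fun w => exp (c * w)) (c * exp (c * w)) w := by
  simpa [mul_comm] using ((hasDerivAt_id w).const_mul c).cexp

theorem eq_mul_exp_of_deriv_eq_mul {c : ℂ} {u : ℂ → ℂ} (hu : Differentiable ℂ u)
    (hu' : ∀ w, deriv u w = c * u w) (w : ℂ) : u w = u 0 * exp (c * w) := by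
  have hφ : ∀ z, HasDerivAt (fun z => u z * exp (-c * z)) 0 z := fun z => by
    refine ((hu z).hasDerivAt.mul (hasDerivAt_cexp_const_mul (-c) z)).congr_deriv ?_
    rw [hu' z]; ring
  have hconst := is_const_of_deriv_eq_zero (fun z => (hφ z).differentiableAt)
    (fun z => (hφ z).deriv) w 0
  simp only [mul_zero, exp_zero, mul_one] at hconst
  rw [← hconst, mul_assoc, ← exp_add]
  simp

theorem eq_exp_combination_of_deriv_deriv_eq_sq_mul {c : ℂ} (hc : c ≠ 0) {h : ℂ → ℂ}
    (hh : Differentiable ℂ h) (hh'' : ∀ w, deriv (deriv h) w = c ^ 2 * h w) (w : ℂ) :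
    h w = (c * h 0 + deriv h 0) / (2 * c) * exp (c * w)
      + (c * h 0 - deriv h 0) / (2 * c) * exp (-c * w) := by
  have hh' : Differentiable ℂ (deriv h) := hh.deriv
  -- `h' + c h` and `h' - c h` solve `u' = c u` and `v' = -c v`.
  have hu := eq_mul_exp_of_deriv_eq_mul (c := c) (hh'.add (hh.const_mul c)) fun z => by
    rw [deriv_add (hh' z) ((hh.const_mul c) z), deriv_const_mul c (hh z), hh'' z]
    simp only [Pi.add_apply]; ring
  have hv := eq_mul_exp_of_deriv_eq_mul (c := -c) (hh'.sub (hh.const_mul c)) fun z => by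
    rw [deriv_sub (hh' z) ((hh.const_mul c) z), deriv_const_mul c (hh z), hh'' z]
    simp only [Pi.sub_apply]; ring
  simp only [Pi.add_apply, Pi.sub_apply] at hu hv
  rw [div_mul_eq_mul_div, div_mul_eq_mul_div, ← add_div,
    eq_div_iff (mul_ne_zero two_ne_zero hc)]
  linear_combination hu w - hv w

theorem deriv_deriv_exp_combination (c A B w : ℂ) :
    deriv (deriv fun w => A * exp (c * w) + B * exp (-c * w)) w
      = c ^ 2 * (A * exp (c * w) + B * exp (-c * w)) := by
  have hd : deriv (fun w => A * exp (c * w) + B * exp (-c * w))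
      = fun w => A * c * exp (c * w) + B * -c * exp (-c * w) := funext fun z => by
    simpa only [mul_assoc] using (((hasDerivAt_cexp_const_mul c z).const_mul A).fun_add
      ((hasDerivAt_cexp_const_mul (-c) z).const_mul B)).deriv
  rw [hd, (((hasDerivAt_cexp_const_mul c w).const_mul (A * c)).fun_add
    ((hasDerivAt_cexp_const_mul (-c) w).const_mul (B * -c))).deriv]
  ring

theorem coeffs_eq_of_exp_combination_eq {c : ℂ} (hc : c ≠ 0) {A B A' B' : ℂ}
    (h : ∀ w, A * exp (c * w) + B * exp (-c * w) = A' * exp (c * w) + B' * exp (-c * w)) :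
    A = A' ∧ B = B' := by
  have h0 : A + B = A' + B' := by simpa using h 0
  have hI := h (Real.pi / 2 * I / c)
  rw [neg_mul, mul_div_cancel₀ _ hc, exp_neg, exp_pi_div_two_mul_I, inv_I] at hI
  have hdiff : A - B = A' - B' := mul_right_cancel₀ I_ne_zero (by linear_combination hI)
  exact ⟨by linear_combination (h0 + hdiff) / 2, by linear_combination (h0 - hdiff) / 2⟩

theorem hasDerivAt_exp_sq_div_mul (τ : ℂ) {f : ℂ → ℂ} {f' w : ℂ} (hf : HasDerivAt f f' w) :
    HasDerivAt (fun w => exp (w ^ 2 / τ) * f w) (exp (w ^ 2 / τ) * (f' + 2 * w / τ * f w)) w := by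
  have hq : HasDerivAt (fun w : ℂ => w ^ 2 / τ) (2 * w / τ) w := by
    simpa using (hasDerivAt_pow 2 w).div_const τ
  exact (hq.cexp.mul hf).congr_deriv (by ring)

theorem deriv_deriv_exp_sq_div_mul {τ : ℂ} (hτ : τ ≠ 0) {f : ℂ → ℂ} (hf : Differentiable ℂ f)
    (w : ℂ) :
    τ ^ 2 / 4 * deriv (deriv fun w => exp (w ^ 2 / τ) * f w) w = exp (w ^ 2 / τ) *
      (τ ^ 2 / 4 * deriv (deriv f) w + τ * w * deriv f w + (w ^ 2 + τ / 2) * f w) := by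
  have hd : deriv (fun w => exp (w ^ 2 / τ) * f w)
      = fun w => exp (w ^ 2 / τ) * (deriv f w + 2 * w / τ * f w) :=
    funext fun z => (hasDerivAt_exp_sq_div_mul τ (hf z).hasDerivAt).deriv
  have hlin : HasDerivAt (fun z : ℂ => 2 * z / τ) (2 / τ) w := by
    simpa using ((hasDerivAt_id w).const_mul 2).div_const τ
  rw [hd, (hasDerivAt_exp_sq_div_mul τ
    ((hf.deriv w).hasDerivAt.fun_add (hlin.fun_mul (hf w).hasDerivAt))).deriv]
  field_simp
  ring

theorem isQuadraticEigenfunction_iff {τ : ℂ} (hτ : τ ≠ 0) (α : ℂ) {f : ℂ → ℂ}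
    (hf : Differentiable ℂ f) :
    IsQuadraticEigenfunction τ α f ↔ ∀ w, deriv (deriv fun w => exp (w ^ 2 / τ) * f w) w
      = (2 * α / τ) ^ 2 * (exp (w ^ 2 / τ) * f w) := by
  refine forall_congr' fun w => ?_
  rw [← mul_right_inj' (exp_ne_zero (w ^ 2 / τ)), ← deriv_deriv_exp_sq_div_mul hτ hf,
    ← mul_right_inj' (div_ne_zero (pow_ne_zero 2 hτ) (by norm_num) : τ ^ 2 / 4 ≠ 0)]
  field_simp
  ring_nf

theorem exp_sq_div_mul_gaussian_combination (τ α a b w : ℂ) :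
    exp (w ^ 2 / τ) * (a * exp (-(w + α) ^ 2 / τ) + b * exp (-(w - α) ^ 2 / τ))
      = exp (-α ^ 2 / τ) * b * exp (2 * α / τ * w)
        + exp (-α ^ 2 / τ) * a * exp (-(2 * α / τ) * w) := by
  have key : ∀ s, exp (w ^ 2 / τ) * exp (-(w + s) ^ 2 / τ)
      = exp (-s ^ 2 / τ) * exp (-(2 * s / τ) * w) := fun s => by rw [← exp_add, ← exp_add]; ring_nf
  have := key (-α)
  rw [← sub_eq_add_neg, neg_sq, show -(2 * -α / τ) = 2 * α / τ by ring] at this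
  linear_combination a * key α + b * this

theorem gaussian_combination_iff (τ α a b : ℂ) (f : ℂ → ℂ) :
    (∀ w, f w = a * exp (-(w + α) ^ 2 / τ) + b * exp (-(w - α) ^ 2 / τ)) ↔
      ∀ w, exp (w ^ 2 / τ) * f w = exp (-α ^ 2 / τ) * b * exp (2 * α / τ * w)
        + exp (-α ^ 2 / τ) * a * exp (-(2 * α / τ) * w) :=
  forall_congr' fun w => by
    rw [← exp_sq_div_mul_gaussian_combination, mul_right_inj' (exp_ne_zero _)]

theorem gaussian_combination_coeffs_unique {τ α : ℂ} (hτ : τ ≠ 0) (hα : α ≠ 0) {f : ℂ → ℂ}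
    {a b a' b' : ℂ}
    (h : ∀ w, f w = a * exp (-(w + α) ^ 2 / τ) + b * exp (-(w - α) ^ 2 / τ))
    (h' : ∀ w, f w = a' * exp (-(w + α) ^ 2 / τ) + b' * exp (-(w - α) ^ 2 / τ)) :
    (a, b) = (a', b') := by
  obtain ⟨hb, ha⟩ := coeffs_eq_of_exp_combination_eq (div_ne_zero (mul_ne_zero two_ne_zero hα) hτ)
    fun w => ((gaussian_combination_iff τ α a b f).1 h w).symm.trans
      ((gaussian_combination_iff τ α a' b' f).1 h' w)
  rw [mul_left_cancel₀ (exp_ne_zero _) ha, mul_left_cancel₀ (exp_ne_zero _) hb]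

/-- For `τ ≠ 0`, `α ≠ 0`: an entire `f` satisfies the `τ`-expression
`(τ²/4) f″ + τ w f′ + (w² + τ/2) f = α² f` of `(α² − w_*²) * f = 0` iff it is a
(unique) linear combination `a e^{−(w+α)²/τ} + b e^{−(w−α)²/τ}`; in particular the
solution is uniquely determined by the boundary data `f(0)` and `f′(0)`. -/
theorem quadratic_eigen_equation_solutions (τ : ℂ) (hτ : τ ≠ 0) (α : ℂ) (hα : α ≠ 0)
    (f : ℂ → ℂ) (hf : Differentiable ℂ f) :
    ((∀ w : ℂ,
        τ ^ 2 / 4 * deriv (deriv f) w + τ * w * deriv f w + (w ^ 2 + τ / 2) * f w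
          = α ^ 2 * f w) ↔
      (∃! p : ℂ × ℂ, ∀ w : ℂ,
        f w = p.1 * Complex.exp (-(w + α) ^ 2 / τ) +
              p.2 * Complex.exp (-(w - α) ^ 2 / τ))) ∧
    (∀ g : ℂ → ℂ, Differentiable ℂ g →
      (∀ w : ℂ,
        τ ^ 2 / 4 * deriv (deriv f) w + τ * w * deriv f w + (w ^ 2 + τ / 2) * f w
          = α ^ 2 * f w) →
      (∀ w : ℂ,
        τ ^ 2 / 4 * deriv (deriv g) w + τ * w * deriv g w + (w ^ 2 + τ / 2) * g w
          = α ^ 2 * g w) →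
      f 0 = g 0 → deriv f 0 = deriv g 0 → f = g) := by
  have hc : 2 * α / τ ≠ 0 := div_ne_zero (mul_ne_zero two_ne_zero hα) hτ
  have hinitial : ∀ g : ℂ → ℂ, Differentiable ℂ g → exp (0 ^ 2 / τ) * g 0 = g 0 ∧
      deriv (fun w => exp (w ^ 2 / τ) * g w) 0 = deriv g 0 := fun g hg => by
    simpa using (hasDerivAt_exp_sq_div_mul τ (hg 0).hasDerivAt).deriv
  refine ⟨⟨fun hsol => ?_, fun ⟨p, hp, _⟩ => ?_⟩, fun g hg hfsol hgsol h0 h0' => ?_⟩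
  · obtain ⟨A, B, hAB⟩ : ∃ A B : ℂ, ∀ w, exp (w ^ 2 / τ) * f w
        = A * exp (2 * α / τ * w) + B * exp (-(2 * α / τ) * w) :=
      ⟨_, _, eq_exp_combination_of_deriv_deriv_eq_sq_mul hc (by fun_prop)
        ((isQuadraticEigenfunction_iff hτ α hf).1 hsol)⟩
    have hcancel : ∀ z, exp (-α ^ 2 / τ) * (exp (α ^ 2 / τ) * z) = z := fun z => by
      rw [← mul_assoc, ← exp_add, neg_div, neg_add_cancel, exp_zero, one_mul]
    have hp : ∀ w, f w = exp (α ^ 2 / τ) * B * exp (-(w + α) ^ 2 / τ)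
        + exp (α ^ 2 / τ) * A * exp (-(w - α) ^ 2 / τ) :=
      (gaussian_combination_iff τ α _ _ f).2 fun w => by rw [hAB w, hcancel, hcancel]
    exact ⟨(_, _), hp, fun q hq => gaussian_combination_coeffs_unique hτ hα hq hp⟩
  · refine (isQuadraticEigenfunction_iff hτ α hf).2 fun w => ?_
    have hrep := (gaussian_combination_iff τ α p.1 p.2 f).1 hp
    rw [funext hrep, deriv_deriv_exp_combination, hrep w]
  · funext w
    have hf' := eq_exp_combination_of_deriv_deriv_eq_sq_mul hc (by fun_prop)
      ((isQuadraticEigenfunction_iff hτ α hf).1 hfsol) w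
    have hg' := eq_exp_combination_of_deriv_deriv_eq_sq_mul hc (by fun_prop)
      ((isQuadraticEigenfunction_iff hτ α hg).1 hgsol) w
    rw [(hinitial f hf).1, (hinitial f hf).2, h0, h0', ← (hinitial g hg).1,
      ← (hinitial g hg).2, ← hg'] at hf'
    exact mul_left_cancel₀ (exp_ne_zero _) hf'
end
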